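/- Let ⋆ be a star product on ℝ^n and τ = π* + Σ_{k≥1} τ_k : (C^∞(ℝ^n,ℂ)[[λ]], ⋆) → (W, ⋆_W) an injective algebra homomorphism with each τ_k homogeneous of degree k for deg = Σ_i p_i ∂_{p_i} + λ ∂_λ. Then the classical limit cl(τ) : C^∞(ℝ^n,ℂ) → W₀ (obtained by setting λ = 0) is an injective homomorphism of Poisson algebras from (C^∞(ℝ^n,ℂ), {·,·}) into (W₀, {·,·}_can), where {·,·}_can is the canonical Poisson bracket {a,b}_can = Σ_k (∂a/∂q^k ∂b/∂p_k − ∂a/∂p_k ∂b/∂q^k): it is an injective algebra homomorphism for the commutative products and sends {f,g} to {cl(τ)(f), cl(τ)(g)}_can. -/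

import Mathlib

set_option synthInstance.maxHeartbeats 1000000
set_option maxHeartbeats 1000000

open scoped BigOperators

noncomputable section

/-- The subalgebra of smooth complex-valued functions on `ℝⁿ`. -/
def smoothSubalgebra (n : ℕ) : Subalgebra ℂ ((Fin n → ℝ) → ℂ) where
  carrier := {f | ContDiff ℝ (⊤ : ℕ∞) f}
  mul_mem' hf hg := by simp only [Set.mem_setOf_eq] at *; exact hf.mul hg
  add_mem' hf hg := by simp only [Set.mem_setOf_eq] at *; exact hf.add hg
  algebraMap_mem' c := by
    show ContDiff ℝ (⊤ : ℕ∞) (fun _ => c)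
    exact contDiff_const

/-- `C^∞(ℝⁿ, ℂ)` as a commutative `ℂ`-algebra. -/
abbrev Cinf (n : ℕ) : Type := smoothSubalgebra n

theorem Cinf.smooth {n : ℕ} (f : Cinf n) : ContDiff ℝ (⊤ : ℕ∞) f.1 := f.2

/-- Complex conjugation as the `*`-involution on `C^∞(ℝⁿ, ℂ)`. -/
instance (n : ℕ) : StarRing (Cinf n) where
  star f := ⟨fun x => (starRingEnd ℂ) (f.1 x), by
    exact Complex.conjCLE.toContinuousLinearMap.contDiff.comp f.smooth⟩
  star_involutive f := Subtype.ext (funext fun x => by simp)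
  star_mul f g := Subtype.ext (funext fun x => by
    simp only [MulMemClass.coe_mul, Pi.mul_apply, map_mul]; ring)
  star_add f g := Subtype.ext (funext fun x => by
    simp only [AddMemClass.coe_add, Pi.add_apply, map_add])

/-- The partial derivative `∂/∂qᵏ` on smooth functions. -/
def pderivQ {n : ℕ} (k : Fin n) (f : Cinf n) : Cinf n :=
  ⟨fun x => fderiv ℝ f.1 x (Pi.single k 1), by
    exact (f.smooth.fderiv_right (m := (⊤ : ℕ∞)) (by norm_cast)).clm_apply contDiff_const⟩

/-- `W₀ = C^∞(ℝⁿ,ℂ)[[p₁,…,pₙ]]`. -/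
abbrev W0 (n : ℕ) : Type := MvPowerSeries (Fin n) (Cinf n)

/-- `W = W₀[[λ]]`. -/
abbrev Wf (n : ℕ) : Type := PowerSeries (W0 n)

/-- `∂/∂qᵏ` on `W₀`, acting on the smooth coefficients. -/
def Dq {n : ℕ} (k : Fin n) (a : W0 n) : W0 n := fun m => pderivQ k (a m)

/-- The formal partial derivative `∂/∂pₖ` on `W₀`. -/
def Dp {n : ℕ} (k : Fin n) (a : W0 n) : W0 n :=
  fun m => (m k + 1 : ℕ) • a (m + Finsupp.single k 1)

/-- The natural inclusion `π* : C^∞(ℝⁿ) → W₀`. -/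
def piW0 {n : ℕ} (f : Cinf n) : W0 n := MvPowerSeries.C (σ := Fin n) (R := Cinf n) f

/-- The natural inclusion `π* : C^∞(ℝⁿ) → W`. -/
def piW {n : ℕ} (f : Cinf n) : Wf n := (PowerSeries.C (R := W0 n)) (piW0 f)

/-- One factor of the bidifferential operator
`P = Σₖ (∂_{qᵏ} ⊗ ∂_{pₖ} − ∂_{pₖ} ⊗ ∂_{qᵏ})`: the derivative hitting the first
tensor factor (`true` records the summand `∂_{qᵏ} ⊗ ∂_{pₖ}`). -/
def fstDeriv {n : ℕ} : Fin n × Bool → W0 n → W0 n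
  | (k, true) => Dq k
  | (k, false) => Dp k

/-- The derivative hitting the second tensor factor. -/
def sndDeriv {n : ℕ} : Fin n × Bool → W0 n → W0 n
  | (k, true) => Dp k
  | (k, false) => Dq k

/-- The sign of each summand of `P`. -/
def pSign {n : ℕ} : Fin n × Bool → ℂ := fun kb => if kb.2 then 1 else -1

/-- Iterated application of the first-factor derivatives along a sequence `t`. -/
def iterFst {n r : ℕ} (t : Fin r → Fin n × Bool) (a : W0 n) : W0 n :=
  (List.ofFn t).foldr (fun kb x => fstDeriv kb x) a

/-- Iterated application of the second-factor derivatives along a sequence `t`. -/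
def iterSnd {n r : ℕ} (t : Fin r → Fin n × Bool) (a : W0 n) : W0 n :=
  (List.ofFn t).foldr (fun kb x => sndDeriv kb x) a

/-- `μ ∘ Pʳ (a ⊗ b)`: the `r`-th power of the Poisson bidifferential operator
`P = Σₖ (∂_{qᵏ} ⊗ ∂_{pₖ} − ∂_{pₖ} ⊗ ∂_{qᵏ})` followed by the (undeformed)
multiplication `μ`. -/
def moyalP {n : ℕ} (r : ℕ) (a b : W0 n) : W0 n :=
  ∑ t : Fin r → Fin n × Bool,
    (∏ j, pSign (t j)) • (iterFst t a * iterSnd t b)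

/-- The formal Weyl–Moyal star product
`a ⋆_W b = μ ∘ exp((iλ/2) Σₖ (∂_{qᵏ} ⊗ ∂_{pₖ} − ∂_{pₖ} ⊗ ∂_{qᵏ}))(a ⊗ b)`
on `W = W₀[[λ]]`. -/
def weylMul {n : ℕ} (a b : Wf n) : Wf n :=
  PowerSeries.mk fun ℓ => ∑ p ∈ Finset.HasAntidiagonal.antidiagonal ℓ, ∑ q ∈ Finset.HasAntidiagonal.antidiagonal p.2,
    ((Complex.I / 2) ^ p.1 / (p.1.factorial : ℂ)) •
      moyalP p.1 (PowerSeries.coeff q.1 a) (PowerSeries.coeff q.2 b)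

/-- Complex conjugation on `W₀` (the formal variables `p` are treated as real). -/
def starW0 {n : ℕ} (a : W0 n) : W0 n := fun m => star (a m)

/-- Complex conjugation on `W = W₀[[λ]]` (`λ` and the `p`'s are treated as real). -/
def starWf {n : ℕ} (w : Wf n) : Wf n :=
  PowerSeries.mk fun ℓ => starW0 (PowerSeries.coeff ℓ w)

/-- The classical limit `cl : W → W₀`, setting `λ = 0`. -/
def clW {n : ℕ} (w : Wf n) : W0 n := PowerSeries.coeff 0 w

/-- The action of a formal series `c ∈ ℂ[[λ]]` on `W`, making `W` a
`ℂ[[λ]]`-module (the element `c(λ)·1` is central, so deformed and undeformed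
multiplication by it agree). -/
def lamSmulW {n : ℕ} (c : PowerSeries ℂ) (w : Wf n) : Wf n :=
  PowerSeries.map (algebraMap ℂ (W0 n)) c * w

/-- The action of `c ∈ ℂ[[λ]]` on `C^∞(ℝⁿ)[[λ]]`. -/
def lamSmulS {n : ℕ} (c : PowerSeries ℂ) (g : PowerSeries (Cinf n)) : PowerSeries (Cinf n) :=
  PowerSeries.map (algebraMap ℂ (Cinf n)) c * g

end
/-! ### Generic algebraic notions: differential operators, Hochschild cochains,
formal deformations and positive functionals. -/

/-- Grothendieck's algebraic notion of a differential operator of order at most `k`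
from a commutative ring `A` to a module `M`, with the action of `A` on `M` given
explicitly by `sm`.  An operator of order `≤ 0` is a module map, and `D` has order
`≤ k+1` if all the commutators `[D, a]` have order `≤ k`. -/
def IsDiffOpLE {A : Type*} [CommRing A] {M : Type*} [AddCommGroup M]
    (sm : A → M → M) : ℕ → (A → M) → Prop
  | 0 => fun D => ∀ a x, D (a * x) = sm a (D x)
  | (k+1) => fun D => ∀ a, IsDiffOpLE sm k fun x => D (a * x) - sm a (D x)

/-- `D : A → M` is a differential operator if it has some finite order. -/
def IsDiffOp {A : Type*} [CommRing A] {M : Type*} [AddCommGroup M]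
    (sm : A → M → M) (D : A → M) : Prop :=
  ∃ k, IsDiffOpLE sm k D

/-- The tuple obtained from `f : Fin (k+1) → A` by multiplying the `i`-th and the
`(i+1)`-st entries. -/
def mergeAt {A : Type*} [Mul A] {k : ℕ} (f : Fin (k + 1) → A) (i : Fin k) : Fin k → A :=
  fun j =>
    if (j : ℕ) < (i : ℕ) then f j.castSucc
    else if (j : ℕ) = (i : ℕ) then f i.castSucc * f i.succ
    else f j.succ

/-- The Hochschild coboundary operator on `k`-cochains of a commutative ring `A` with
values in an `(A,A)`-bimodule `M`, whose left and right actions are given explicitly by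
`L` and `R`:
`(δφ)(f₀,…,f_k) = f₀·φ(f₁,…,f_k) + Σᵢ (−1)^{i+1} φ(f₀,…,fᵢfᵢ₊₁,…,f_k) + (−1)^{k+1} φ(f₀,…,f_{k−1})·f_k`. -/
def hDelta {A : Type*} [CommRing A] {M : Type*} [AddCommGroup M]
    (L : A → M → M) (R : M → A → M) {k : ℕ} (φ : (Fin k → A) → M) :
    (Fin (k + 1) → A) → M := fun f =>
  L (f 0) (φ fun i => f i.succ)
    + ∑ i : Fin k, (-1 : ℤ) ^ ((i : ℕ) + 1) • φ (mergeAt f i)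
    + (-1 : ℤ) ^ (k + 1) • R (φ fun i => f i.castSucc) (f (Fin.last k))

/-- A `k`-multilinear cochain (over `ℂ`). -/
def IsMultilinC {A : Type*} [CommRing A] [Algebra ℂ A] {M : Type*} [AddCommGroup M]
    [Module ℂ M] {k : ℕ} (φ : (Fin k → A) → M) : Prop :=
  (∀ (f : Fin k → A) (i : Fin k) (x y : A),
      φ (Function.update f i (x + y)) = φ (Function.update f i x) + φ (Function.update f i y)) ∧
  (∀ (f : Fin k → A) (i : Fin k) (c : ℂ) (x : A),
      φ (Function.update f i (c • x)) = c • φ (Function.update f i x))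

/-- The total antisymmetrization operator on `k`-cochains. -/
noncomputable def altC {A : Type*} {M : Type*} [AddCommGroup M] [Module ℂ M] {k : ℕ}
    (φ : (Fin k → A) → M) : (Fin k → A) → M := fun f =>
  (k.factorial : ℂ)⁻¹ • ∑ σ : Equiv.Perm (Fin k), ((Equiv.Perm.sign σ : ℤ)) • φ (f ∘ σ)

/-- The formal deformation `F ⋆ G = Σₙ λⁿ Σ_{r+i+j=n} C_r(F_i, G_j)` of an algebra `A`
determined by a family of "cochains" `C_r : A × A → A`, where `C_0` is meant to be the
undeformed product.  This is the general form of a star product. -/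
noncomputable def starMulC {A : Type*} [Ring A] (C : ℕ → A → A → A) (F G : PowerSeries A) :
    PowerSeries A :=
  PowerSeries.mk fun ℓ => ∑ p ∈ Finset.HasAntidiagonal.antidiagonal ℓ, ∑ q ∈ Finset.HasAntidiagonal.antidiagonal p.2,
    C p.1 (PowerSeries.coeff q.1 F) (PowerSeries.coeff q.2 G)

/-- The coefficientwise involution on `A[[λ]]` (the formal parameter `λ` is real). -/
noncomputable def starSeries {A : Type*} [Semiring A] [Star A] (F : PowerSeries A) :
    PowerSeries A :=
  PowerSeries.mk fun ℓ => star (PowerSeries.coeff ℓ F)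

/-- `C` is a (bidifferential) star product on the commutative `ℂ`-algebra `A`:
`C_0` is the pointwise product, each `C_r` is `ℂ`-bilinear and a differential operator
in each argument, and the total product on `A[[λ]]` is associative. -/
structure IsStarProduct (A : Type*) [CommRing A] [Algebra ℂ A] (C : ℕ → A → A → A) :
    Prop where
  C_zero : ∀ f g, C 0 f g = f * g
  add_left : ∀ r f f' g, C r (f + f') g = C r f g + C r f' g
  add_right : ∀ r f g g', C r f (g + g') = C r f g + C r f g'
  smul_left : ∀ (r : ℕ) (c : ℂ) f g, C r (c • f) g = c • C r f g
  smul_right : ∀ (r : ℕ) (c : ℂ) f g, C r f (c • g) = c • C r f g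
  diff_left : ∀ r g, IsDiffOp (· * ·) fun f => C r f g
  diff_right : ∀ r f, IsDiffOp (· * ·) fun g => C r f g
  assoc : ∀ F G H, starMulC C (starMulC C F G) H = starMulC C F (starMulC C G H)

/-- `P` is a Poisson bracket on the commutative `ℂ`-algebra `A`. -/
structure IsPoissonBracket (A : Type*) [CommRing A] [Algebra ℂ A] (P : A → A → A) :
    Prop where
  antisymm : ∀ f g, P f g = - P g f
  add_left : ∀ f f' g, P (f + f') g = P f g + P f' g
  smul_left : ∀ (c : ℂ) f g, P (c • f) g = c • P f g
  leibniz : ∀ f g h, P f (g * h) = P f g * h + g * P f h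
  jacobi : ∀ f g h, P f (P g h) + P g (P h f) + P h (P f g) = 0

/-- The star product `C` quantizes the Poisson bracket `P`:
`C₁(f,g) − C₁(g,f) = i {f, g}`. -/
def QuantizesPB {A : Type*} [CommRing A] [Algebra ℂ A] (C : ℕ → A → A → A)
    (P : A → A → A) : Prop :=
  ∀ f g, C 1 f g - C 1 g f = Complex.I • P f g

/-- The star product `C` is Hermitian: `conj (F ⋆ G) = (conj G) ⋆ (conj F)`. -/
def IsHermitianSP {A : Type*} [Ring A] [Star A] (C : ℕ → A → A → A) : Prop :=
  ∀ F G, starSeries (starMulC C F G) = starMulC C (starSeries G) (starSeries F)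

/-- The `ℂ[[λ]]`-linear functional `ω = Σᵣ λʳ ωᵣ : A[[λ]] → ℂ[[λ]]` determined by a
family of `ℂ`-linear functionals `ωᵣ : A → ℂ`. -/
noncomputable def extFun {A : Type*} [Ring A] [Module ℂ A] (ω : ℕ → A →ₗ[ℂ] ℂ)
    (F : PowerSeries A) : PowerSeries ℂ :=
  PowerSeries.mk fun ℓ => ∑ q ∈ Finset.HasAntidiagonal.antidiagonal ℓ, ω q.1 (PowerSeries.coeff q.2 F)

/-- `s ≥ 0` in `ℝ[[λ]] ⊂ ℂ[[λ]]`: all coefficients of `s` are real and `s` is either zero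
or its lowest non-vanishing coefficient is positive.  This is the ring ordering of
`ℝ[[λ]]` in which `λ` is positive and infinitesimally small. -/
def IsNonnegSeries (s : PowerSeries ℂ) : Prop :=
  (∀ m, (PowerSeries.coeff m s).im = 0) ∧
    (s = 0 ∨ ∃ N, (∀ m, m < N → PowerSeries.coeff m s = 0) ∧ 0 < (PowerSeries.coeff N s).re)

/-- The entrywise extension of a family `C_r` of cochains on `A` to matrices,
`(C_r(X,Y))_{ij} = Σ_l C_r(X_{il}, Y_{lj})`. -/
noncomputable def matC {A : Type*} [Ring A] (N : ℕ) (C : ℕ → A → A → A) :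
    ℕ → Matrix (Fin N) (Fin N) A → Matrix (Fin N) (Fin N) A → Matrix (Fin N) (Fin N) A :=
  fun r X Y i j => ∑ l, C r (X i l) (Y l j)
/-! ### The bimodule structures on `W` and `W₀`, the degree map, and related notions. -/

/-- Left action of `C^∞(ℝⁿ)` on `W` by `⋆_W`-multiplication with `π*(f)`. -/
noncomputable def Lw {n : ℕ} (f : Cinf n) (w : Wf n) : Wf n := weylMul (piW f) w

/-- Right action of `C^∞(ℝⁿ)` on `W` by `⋆_W`-multiplication with `π*(f)`. -/
noncomputable def Rw {n : ℕ} (w : Wf n) (f : Cinf n) : Wf n := weylMul w (piW f)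

/-- The pointwise (undeformed) action of `C^∞(ℝⁿ)` on `W`. -/
noncomputable def ptSmulW {n : ℕ} (f : Cinf n) (w : Wf n) : Wf n := piW f * w

/-- The pointwise left action of `C^∞(ℝⁿ)` on `W₀`. -/
noncomputable def L0 {n : ℕ} (f : Cinf n) (b : W0 n) : W0 n := piW0 f * b

/-- The pointwise right action of `C^∞(ℝⁿ)` on `W₀`. -/
noncomputable def R0 {n : ℕ} (b : W0 n) (f : Cinf n) : W0 n := b * piW0 f

/-- A `W`-valued cochain is differential if it is a differential operator in each
argument. -/
def IsDiffCochainW {n k : ℕ} (φ : (Fin k → Cinf n) → Wf n) : Prop :=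
  ∀ (f : Fin k → Cinf n) (i : Fin k), IsDiffOp ptSmulW fun x => φ (Function.update f i x)

/-- A `W₀`-valued cochain is differential if it is a differential operator in each
argument. -/
def IsDiffCochain0 {n k : ℕ} (φ : (Fin k → Cinf n) → W0 n) : Prop :=
  ∀ (f : Fin k → Cinf n) (i : Fin k), IsDiffOp L0 fun x => φ (Function.update f i x)

/-- The involution `φ ↦ φ*` on `W`-valued Hochschild cochains,
`φ*(f₁,…,f_r) = conj (φ (conj f_r, …, conj f₁))`. -/
noncomputable def cochainStar {n r : ℕ} (φ : (Fin r → Cinf n) → Wf n) :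
    (Fin r → Cinf n) → Wf n := fun f =>
  starWf (φ fun i => star (f i.rev))

/-- The Euler operator `Σᵢ pᵢ ∂/∂pᵢ` on `W₀`. -/
noncomputable def pEuler {n : ℕ} (b : W0 n) : W0 n :=
  ∑ i : Fin n, MvPowerSeries.X i * Dp i b

/-- The degree map `deg = Σᵢ pᵢ ∂/∂pᵢ + λ ∂/∂λ` on `W`. -/
noncomputable def degW {n : ℕ} (w : Wf n) : Wf n :=
  PowerSeries.mk fun ℓ =>
    ℓ • PowerSeries.coeff ℓ w + pEuler (PowerSeries.coeff ℓ w)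

/-- `w ∈ W` is homogeneous of degree `k` with respect to `deg`. -/
def IsDegHomogElem {n : ℕ} (k : ℕ) (w : Wf n) : Prop := degW w = k • w

/-- A map `τ : C^∞(ℝⁿ) → W` is homogeneous of degree `k` with respect to `deg`. -/
def IsDegHomog {n : ℕ} (k : ℕ) (τ : Cinf n → Wf n) : Prop :=
  ∀ f, degW (τ f) = k • τ f

/-- `τ : C^∞(ℝⁿ) → W` is an element of `HC¹(C^∞(ℝⁿ), W)`: it is `ℂ`-linear and a
differential operator. -/
def IsHC1 {n : ℕ} (τ : Cinf n → Wf n) : Prop :=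
  (∀ f g, τ (f + g) = τ f + τ g) ∧ (∀ (c : ℂ) (f : Cinf n), τ (c • f) = c • τ f) ∧
    IsDiffOp ptSmulW τ

/-- `w ∈ W` lies in the part of `deg`-degree at least `N` (all components of total
degree `< N` in the `pᵢ` and `λ` vanish).  Used to express convergence of the series
`Σₖ τₖ` in the `deg`-adic topology. -/
def degOrderGE {n : ℕ} (N : ℕ) (w : Wf n) : Prop :=
  ∀ (ℓ : ℕ) (m : Fin n →₀ ℕ),
    (m.sum fun _ e => e) + ℓ < N → PowerSeries.coeff ℓ w m = 0

/-- The component of `w ∈ W` of `deg`-degree exactly `d`. -/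
noncomputable def degComp {n : ℕ} (d : ℕ) (w : Wf n) : Wf n :=
  PowerSeries.mk fun ℓ =>
    (fun m => if (m.sum fun _ e => e) + ℓ = d then PowerSeries.coeff ℓ w m else 0 :
      W0 n)

/-- The `λ`-linear extension of the finite sum `τ₀ + ⋯ + τ_{k−1}` to a map
`C^∞(ℝⁿ)[[λ]] → W`. -/
noncomputable def extSum {n : ℕ} (τ : ℕ → Cinf n → Wf n) (k : ℕ)
    (F : PowerSeries (Cinf n)) : Wf n :=
  PowerSeries.mk fun ℓ => ∑ q ∈ Finset.HasAntidiagonal.antidiagonal ℓ, ∑ i ∈ Finset.range k,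
    PowerSeries.coeff q.1 (τ i (PowerSeries.coeff q.2 F))

/-- The `λ`-linear (that is, `ℂ[[λ]]`-linear) extension
`π* : C^∞(ℝⁿ)[[λ]] → W` of the natural inclusion. -/
noncomputable def piHat {n : ℕ} (F : PowerSeries (Cinf n)) : Wf n :=
  PowerSeries.map (MvPowerSeries.C (σ := Fin n) (R := Cinf n)) F

/-- The canonical Poisson bracket `{a,b} = Σₖ (∂a/∂qᵏ ∂b/∂pₖ − ∂a/∂pₖ ∂b/∂qᵏ)` on the
formal cotangent bundle, i.e. on `W₀`. -/
noncomputable def pbCan {n : ℕ} (a b : W0 n) : W0 n :=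
  ∑ k : Fin n, (Dq k a * Dp k b - Dp k a * Dq k b)
/-!
The classical limit only sees the coefficients of `λ⁰` and `λ¹`. Since `T` is
`ℂ[[λ]]`-linear, `T (λ G) = λ T G`; hence `cl ∘ T` factors through `λ = 0`, and the
`λ¹`-coefficient of `T F` is `cl (T (F / λ))` whenever `F` has no constant term.
Applied to `f ⋆ g` and to the commutator `f ⋆ g − g ⋆ f = λ (i {f,g} + O(λ))`, whose
images are `T f ⋆_W T g` and `λ i {cl T f, cl T g}_can + O(λ²)`, this gives
multiplicativity and the bracket relation. Injectivity holds because
`π*` is the leading term of `T` on constants.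
-/

open PowerSeries

theorem moyalP_zero {n : ℕ} (a b : W0 n) : moyalP 0 a b = a * b := by
  simp [moyalP, iterFst, iterSnd]

theorem moyalP_one {n : ℕ} (a b : W0 n) : moyalP 1 a b = pbCan a b := by
  rw [moyalP, ← (Equiv.funUnique (Fin 1) (Fin n × Bool)).symm.sum_comp, Fintype.sum_prod_type,
    pbCan]
  refine Finset.sum_congr rfl fun k _ => ?_
  simp [iterFst, iterSnd, pSign, fstDeriv, sndDeriv, sub_eq_add_neg]

theorem pbCan_antisymm {n : ℕ} (a b : W0 n) : pbCan a b = - pbCan b a := by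
  rw [pbCan, pbCan, ← Finset.sum_neg_distrib]
  exact Finset.sum_congr rfl fun k _ => by ring

theorem coeff_zero_weylMul {n : ℕ} (a b : Wf n) :
    coeff 0 (weylMul a b) = coeff 0 a * coeff 0 b := by
  simp [weylMul, moyalP_zero]

theorem coeff_one_weylMul {n : ℕ} (a b : Wf n) :
    coeff 1 (weylMul a b) = coeff 0 a * coeff 1 b + coeff 1 a * coeff 0 b
      + (Complex.I / 2) • pbCan (coeff 0 a) (coeff 0 b) := by
  simp [weylMul, moyalP_zero, moyalP_one, Finset.Nat.antidiagonal_succ]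

theorem coeff_one_weylMul_sub_weylMul {n : ℕ} (a b : Wf n) :
    coeff 1 (weylMul a b - weylMul b a) = Complex.I • pbCan (coeff 0 a) (coeff 0 b) := by
  rw [map_sub, coeff_one_weylMul, coeff_one_weylMul, pbCan_antisymm (coeff 0 b), smul_neg,
    mul_comm (coeff 0 b), mul_comm (coeff 1 b)]
  have halves : Complex.I • pbCan (coeff 0 a) (coeff 0 b)
      = (Complex.I / 2) • pbCan (coeff 0 a) (coeff 0 b)
        + (Complex.I / 2) • pbCan (coeff 0 a) (coeff 0 b) := by
    rw [← add_smul, add_halves]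
  rw [halves]
  abel

section StarMulC

variable {A : Type*} [Ring A] (C : ℕ → A → A → A)

theorem coeff_zero_starMulC (F G : PowerSeries A) :
    coeff 0 (starMulC C F G) = C 0 (coeff 0 F) (coeff 0 G) := by
  simp [starMulC]

theorem coeff_one_starMulC (F G : PowerSeries A) :
    coeff 1 (starMulC C F G) = C 0 (coeff 0 F) (coeff 1 G) + C 0 (coeff 1 F) (coeff 0 G)
      + C 1 (coeff 0 F) (coeff 0 G) := by
  simp [starMulC, Finset.Nat.antidiagonal_succ]

variable {C} (hC0 : ∀ f g, C 0 f g = f * g)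
include hC0

theorem coeff_zero_starMulC_C (f g : A) :
    coeff 0 (starMulC C (PowerSeries.C f) (PowerSeries.C g)) = f * g := by
  rw [coeff_zero_starMulC, coeff_zero_C, coeff_zero_C, hC0]

theorem coeff_one_starMulC_C (f g : A) :
    coeff 1 (starMulC C (PowerSeries.C f) (PowerSeries.C g)) = C 1 f g := by
  simp [coeff_one_starMulC, hC0, coeff_C]

end StarMulC

theorem constantCoeff_clW_of_degOrderGE_one {n : ℕ} {w : Wf n} {f : Cinf n}
    (hw : degOrderGE 1 (w - piW f)) : MvPowerSeries.constantCoeff (clW w) = f := by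
  have h : MvPowerSeries.coeff 0 (coeff 0 (w - piW f)) = 0 := hw 0 0 (by simp)
  rwa [map_sub, piW, coeff_zero_C, map_sub, piW0, MvPowerSeries.coeff_zero_C,
    MvPowerSeries.coeff_zero_eq_constantCoeff_apply, sub_eq_zero, ← clW] at h

theorem PowerSeries.C_smul {R S : Type*} [Semiring R] [Semiring S] [Module R S] (c : R) (x : S) :
    PowerSeries.C (c • x) = c • PowerSeries.C x := by
  ext m
  simp [coeff_C]

section LambdaLinear

variable {n : ℕ} {T : PowerSeries (Cinf n) → Wf n}
  (hTlam : ∀ (s : PowerSeries ℂ) F, T (lamSmulS s F) = lamSmulW s (T F))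
include hTlam

theorem map_X_mul_of_lamSmul (G : PowerSeries (Cinf n)) : T (X * G) = X * T G := by
  simpa [lamSmulS, lamSmulW] using hTlam X G

theorem map_smul_of_lamSmul (c : ℂ) (F : PowerSeries (Cinf n)) : T (c • F) = c • T F := by
  simpa [lamSmulS, lamSmulW, Algebra.smul_def, PowerSeries.algebraMap_apply] using hTlam (C c) F

variable (hTadd : ∀ F G, T (F + G) = T F + T G)
include hTadd

theorem clW_map_eq_clW_map_C_coeff_zero (F : PowerSeries (Cinf n)) :
    clW (T F) = clW (T (C (coeff 0 F))) := by
  obtain ⟨G, hG⟩ : X ∣ F - C (coeff 0 F) := by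
    rw [X_dvd_iff, map_sub, constantCoeff_C, ← coeff_zero_eq_constantCoeff_apply, sub_self]
  rw [← sub_add_cancel F (C (coeff 0 F)), hG, hTadd, map_X_mul_of_lamSmul hTlam, clW, clW,
    map_add, coeff_zero_X_mul, zero_add, map_add, coeff_zero_X_mul, coeff_zero_C, zero_add]

theorem coeff_one_map_of_coeff_zero_eq_zero {F : PowerSeries (Cinf n)} (hF : coeff 0 F = 0) :
    coeff 1 (T F) = clW (T (C (coeff 1 F))) := by
  obtain ⟨G, rfl⟩ : X ∣ F := X_dvd_iff.mpr (by rwa [← coeff_zero_eq_constantCoeff_apply])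
  rw [map_X_mul_of_lamSmul hTlam, coeff_succ_X_mul, coeff_succ_X_mul,
    ← clW_map_eq_clW_map_C_coeff_zero hTlam hTadd, clW]

end LambdaLinear

theorem classical_limit_is_formal_symplectic_realization_general {n : ℕ}
    (C : ℕ → Cinf n → Cinf n → Cinf n) (P : Cinf n → Cinf n → Cinf n)
    (hC : IsStarProduct (Cinf n) C)
    (hq : QuantizesPB C P)
    (τ : ℕ → Cinf n → Wf n) (T : PowerSeries (Cinf n) → Wf n)
    (hτ0 : τ 0 = piW)
    (hTadd : ∀ F G, T (F + G) = T F + T G)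
    (hTlam : ∀ (s : PowerSeries ℂ) F, T (lamSmulS s F) = lamSmulW s (T F))
    (hTrep : ∀ (f : Cinf n) (N : ℕ),
      degOrderGE N (T ((PowerSeries.C (R := Cinf n)) f) - ∑ k ∈ Finset.range N, τ k f))
    (hThom : ∀ F G, T (starMulC C F G) = weylMul (T F) (T G)) :
    Function.Injective (fun f : Cinf n => clW (T ((PowerSeries.C (R := Cinf n)) f))) ∧
    (∀ f g : Cinf n, clW (T ((PowerSeries.C (R := Cinf n)) (f + g)))
        = clW (T ((PowerSeries.C (R := Cinf n)) f)) + clW (T ((PowerSeries.C (R := Cinf n)) g))) ∧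
    (∀ f g : Cinf n, clW (T ((PowerSeries.C (R := Cinf n)) (f * g)))
        = clW (T ((PowerSeries.C (R := Cinf n)) f)) * clW (T ((PowerSeries.C (R := Cinf n)) g))) ∧
    (∀ f g : Cinf n, clW (T ((PowerSeries.C (R := Cinf n)) (P f g)))
        = pbCan (clW (T ((PowerSeries.C (R := Cinf n)) f)))
            (clW (T ((PowerSeries.C (R := Cinf n)) g)))) := by
  have hTsub : ∀ F G, T (F - G) = T F - T G := (AddMonoidHom.mk' T hTadd).map_sub
  refine ⟨?injective, ?map_add, ?map_mul, ?map_bracket⟩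
  case injective =>
    refine Function.LeftInverse.injective (g := MvPowerSeries.constantCoeff) fun f => ?_
    exact constantCoeff_clW_of_degOrderGE_one (by simpa [hτ0] using hTrep f 1)
  case map_add =>
    intro f g
    rw [map_add, hTadd]
    exact map_add (coeff 0) _ _
  case map_mul =>
    intro f g
    rw [← coeff_zero_starMulC_C hC.C_zero f g, ← clW_map_eq_clW_map_C_coeff_zero hTlam hTadd,
      hThom]
    exact coeff_zero_weylMul _ _
  case map_bracket =>
    intro f g
    set E := starMulC C (PowerSeries.C f) (PowerSeries.C g)
      - starMulC C (PowerSeries.C g) (PowerSeries.C f)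
    have hE0 : coeff 0 E = 0 := by
      rw [map_sub, coeff_zero_starMulC_C hC.C_zero, coeff_zero_starMulC_C hC.C_zero, mul_comm,
        sub_self]
    have hE1 : coeff 1 E = Complex.I • P f g := by
      rw [map_sub, coeff_one_starMulC_C hC.C_zero, coeff_one_starMulC_C hC.C_zero, hq]
    apply smul_right_injective (W0 n) Complex.I_ne_zero
    calc Complex.I • clW (T (PowerSeries.C (P f g)))
        = clW (T (PowerSeries.C (coeff 1 E))) := by
          rw [hE1, PowerSeries.C_smul, map_smul_of_lamSmul hTlam, clW, clW, coeff_smul]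
      _ = coeff 1 (T E) := (coeff_one_map_of_coeff_zero_eq_zero hTlam hTadd hE0).symm
      _ = Complex.I • pbCan (clW (T (PowerSeries.C f))) (clW (T (PowerSeries.C g))) := by
          rw [hTsub, hThom, hThom]
          exact coeff_one_weylMul_sub_weylMul _ _

/-- Let `⋆` be a star product on `ℝⁿ` quantizing the Poisson bracket
`P`, and `τ = π* + Σ_{k≥1} τ_k : (C^∞(ℝⁿ,ℂ)[[λ]], ⋆) → (W, ⋆_W)` an injective algebra
homomorphism with `τ_k` homogeneous of degree `k`.  Then the classical limit
`cl(τ) : C^∞(ℝⁿ,ℂ) → W₀` is an injective homomorphism of Poisson algebras into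
`(W₀, {·,·}_can)`. -/
theorem classical_limit_is_formal_symplectic_realization {n : ℕ}
    (C : ℕ → Cinf n → Cinf n → Cinf n) (P : Cinf n → Cinf n → Cinf n)
    (hC : IsStarProduct (Cinf n) C) (hP : IsPoissonBracket (Cinf n) P)
    (hq : QuantizesPB C P)
    (τ : ℕ → Cinf n → Wf n) (T : PowerSeries (Cinf n) → Wf n)
    (hτ0 : τ 0 = piW)
    (hτ : ∀ k, IsHC1 (τ k) ∧ IsDegHomog k (τ k))
    (hTadd : ∀ F G, T (F + G) = T F + T G)
    (hTlam : ∀ (s : PowerSeries ℂ) F, T (lamSmulS s F) = lamSmulW s (T F))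
    (hTrep : ∀ (f : Cinf n) (N : ℕ),
      degOrderGE N (T ((PowerSeries.C (R := Cinf n)) f) - ∑ k ∈ Finset.range N, τ k f))
    (hTinj : Function.Injective T)
    (hThom : ∀ F G, T (starMulC C F G) = weylMul (T F) (T G)) :
    Function.Injective (fun f : Cinf n => clW (T ((PowerSeries.C (R := Cinf n)) f))) ∧
    (∀ f g : Cinf n, clW (T ((PowerSeries.C (R := Cinf n)) (f + g)))
        = clW (T ((PowerSeries.C (R := Cinf n)) f)) + clW (T ((PowerSeries.C (R := Cinf n)) g))) ∧
    (∀ f g : Cinf n, clW (T ((PowerSeries.C (R := Cinf n)) (f * g)))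
        = clW (T ((PowerSeries.C (R := Cinf n)) f)) * clW (T ((PowerSeries.C (R := Cinf n)) g))) ∧
    (∀ f g : Cinf n, clW (T ((PowerSeries.C (R := Cinf n)) (P f g)))
        = pbCan (clW (T ((PowerSeries.C (R := Cinf n)) f)))
            (clW (T ((PowerSeries.C (R := Cinf n)) g)))) :=
  classical_limit_is_formal_symplectic_realization_general C P hC hq τ T hτ0 hTadd hTlam hTrep hThom
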